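/- The edge-sum chromatic number of H^{-4,3}_{1,2} is 6 and its chromatic index is 5; in particular H^{-4,3}_{1,2} is a non-perfect edge-sum color graph. -/

import Mathlib

/-- The integral sum graph on vertex set `{r, ..., s} ⊆ ℤ`:
distinct `u, v` are adjacent iff `u + v` also lies in `{r, ..., s}`. -/
def intervalSumGraph (r s : ℤ) : SimpleGraph ℤ where
  Adj u v := u ≠ v ∧ u ∈ Set.Icc r s ∧ v ∈ Set.Icc r s ∧ u + v ∈ Set.Icc r s
  symm := by
    constructor
    rintro u v ⟨h1, h2, h3, h4⟩
    exact ⟨h1.symm, h3, h2, by rwa [add_comm]⟩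
  loopless := ⟨fun u h => h.1 rfl⟩

/-- The graph `H^{-i,s}_{m,j}`: obtained from the integral sum graph `G_{-i,s}`
by deleting the vertices `-m` and `j` and all edges whose endpoint labels sum
to `-m` or to `j`. -/
def HGraph (i s m j : ℤ) : SimpleGraph ℤ where
  Adj u v := u ≠ v ∧ u ∈ Set.Icc (-i) s ∧ v ∈ Set.Icc (-i) s ∧ u + v ∈ Set.Icc (-i) s ∧
    u ≠ -m ∧ v ≠ -m ∧ u ≠ j ∧ v ≠ j ∧ u + v ≠ -m ∧ u + v ≠ j
  symm := by
    constructor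
    rintro u v ⟨h1, h2, h3, h4, h5, h6, h7, h8, h9, h10⟩
    exact ⟨h1.symm, h3, h2, by rwa [add_comm], h6, h5, h8, h7,
      by rwa [add_comm], by rwa [add_comm]⟩
  loopless := ⟨fun u h => h.1 rfl⟩

/-- The chromatic index of a graph: the least `n` such that there is a proper
edge coloring with `n` colors (distinct edges sharing a vertex get distinct colors). -/
noncomputable def chromaticIndex {V : Type*} (G : SimpleGraph V) : ℕ :=
  sInf {n : ℕ | ∃ c : Sym2 V → Fin n,
    ∀ e ∈ G.edgeSet, ∀ f ∈ G.edgeSet, e ≠ f → (∃ v, v ∈ e ∧ v ∈ f) → c e ≠ c f}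

/-- The sum of the two endpoint labels of an edge. -/
def edgeSum (e : Sym2 ℤ) : ℤ := Sym2.lift ⟨fun a b => a + b, fun a b => add_comm a b⟩ e

/-- The edge-sum chromatic number: the number of nonempty edge-sum color classes. -/
noncomputable def edgeSumChromatic (G : SimpleGraph ℤ) : ℕ :=
  {k : ℤ | ∃ e ∈ G.edgeSet, edgeSum e = k}.ncard

/-!
Vertex `0` of `H = H^{-4,3}_{1,2}` has the five neighbours `-4, -3, -2, 1, 3`, so `χ'(H) ≥ 5`.
Each edge-sum class is a matching (an edge through `u` with sum `k` is `{u, k - u}`), so colouring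
edges by their sum is proper; of the six classes `E_{-4}, E_{-3}, E_{-2}, E_0, E_1, E_3` of `H`,
`E_{-4} = {{-4, 0}}` and `E_0 = {{-3, 3}}` are vertex-disjoint and may share a colour, which gives
a proper 5-edge-colouring.
-/

open SimpleGraph

section EdgeColoring

variable {V α : Type*} {G : SimpleGraph V}

variable (G) in
def IsProperEdgeColoring (c : Sym2 V → α) : Prop :=
  ∀ e ∈ G.edgeSet, ∀ f ∈ G.edgeSet, e ≠ f → (∃ v, v ∈ e ∧ v ∈ f) → c e ≠ c f

theorem IsProperEdgeColoring.injOn_incidenceSet {c : Sym2 V → α}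
    (hc : IsProperEdgeColoring G c) (v : V) : Set.InjOn c (G.incidenceSet v) :=
  fun e he f hf hcef => by_contra fun hne => hc e he.1 f hf.1 hne ⟨v, he.2, hf.2⟩ hcef

theorem IsProperEdgeColoring.ncard_incidenceSet_le {n : ℕ} {c : Sym2 V → Fin n}
    (hc : IsProperEdgeColoring G c) (v : V) : (G.incidenceSet v).ncard ≤ n := by
  simpa using Set.ncard_le_ncard_of_injOn c (fun _ _ => Set.mem_univ _) (hc.injOn_incidenceSet v)

theorem chromaticIndex_le {n : ℕ} {c : Sym2 V → Fin n} (hc : IsProperEdgeColoring G c) :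
    chromaticIndex G ≤ n :=
  Nat.sInf_le ⟨c, hc⟩

theorem ncard_incidenceSet_le_chromaticIndex {n : ℕ} {c : Sym2 V → Fin n}
    (hc : IsProperEdgeColoring G c) (v : V) : (G.incidenceSet v).ncard ≤ chromaticIndex G :=
  le_csInf ⟨n, c, hc⟩ fun _ ⟨_, hc'⟩ => IsProperEdgeColoring.ncard_incidenceSet_le hc' v

theorem edgeSet_eq_filter_sym2 [DecidableEq V] [DecidablePred (· ∈ G.edgeSet)] (S : Finset V)
    (hS : ∀ u v, G.Adj u v → u ∈ S) : G.edgeSet = ↑(S.sym2.filter (· ∈ G.edgeSet)) := by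
  ext e
  induction e using Sym2.ind with
  | _ u v =>
    simp only [Finset.coe_filter, Finset.mk_mem_sym2_iff, Set.mem_ofPred_eq, iff_and_self,
      mem_edgeSet]
    exact fun h => ⟨hS u v h, hS v u h.symm⟩

theorem incidenceSet_eq_coe_filter [DecidableEq V] {E : Finset (Sym2 V)} (hE : G.edgeSet = E)
    (v : V) : G.incidenceSet v = ↑(E.filter (v ∈ ·)) := by
  ext e
  simp [incidenceSet, hE]

end EdgeColoring

theorem edgeSumChromatic_eq_ncard_image (G : SimpleGraph ℤ) :
    edgeSumChromatic G = (edgeSum '' G.edgeSet).ncard :=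
  rfl

theorem isProperEdgeColoring_comp_edgeSum {α : Type*} {G : SimpleGraph ℤ} {g : ℤ → α}
    (hg : ∀ u, Set.InjOn (fun v => g (u + v)) (G.neighborSet u)) :
    IsProperEdgeColoring G (g ∘ edgeSum) := by
  rintro e he f hf hne ⟨u, ⟨v, rfl⟩, ⟨w, rfl⟩⟩ hcol
  exact hne (congrArg _ (hg u he hf hcol))

/-- Noncomputable only because the order in `Set.Icc` is elaborated through
`Int.instConditionallyCompleteLinearOrder`; the decisions themselves are by `Int.decLe`, so `decide`
can evaluate them. -/
noncomputable instance (i s m j : ℤ) : DecidableRel (HGraph i s m j).Adj :=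
  fun _ _ => inferInstanceAs (Decidable (_ ∧ _))

theorem HGraph.mem_Icc_of_adj {i s m j u v : ℤ} (h : (HGraph i s m j).Adj u v) :
    u ∈ Finset.Icc (-i) s :=
  Finset.mem_Icc.2 h.2.1

theorem edgeSet_HGraph_4_3_1_2 : (HGraph 4 3 1 2).edgeSet =
    ↑({s(-4, 0), s(-4, 1), s(-3, 0), s(-3, 1), s(-3, 3), s(-2, 0), s(-2, 3), s(0, 1), s(0, 3)} :
      Finset (Sym2 ℤ)) := by
  rw [edgeSet_eq_filter_sym2 _ fun _ _ => HGraph.mem_Icc_of_adj, Finset.coe_inj]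
  decide

theorem edgeSumChromatic_HGraph_4_3_1_2 : edgeSumChromatic (HGraph 4 3 1 2) = 6 := by
  rw [edgeSumChromatic_eq_ncard_image, edgeSet_HGraph_4_3_1_2, ← Finset.coe_image,
    Set.ncard_coe_finset]
  decide

theorem ncard_incidenceSet_HGraph_4_3_1_2_zero : ((HGraph 4 3 1 2).incidenceSet 0).ncard = 5 := by
  rw [incidenceSet_eq_coe_filter edgeSet_HGraph_4_3_1_2, Set.ncard_coe_finset]
  decide

def sumColor (k : ℤ) : Fin 5 :=
  if k = -3 then 1 else if k = -2 then 2 else if k = 1 then 3 else if k = 3 then 4 else 0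

theorem injOn_sumColor_neighborSet_HGraph_4_3_1_2 (u : ℤ) :
    Set.InjOn (fun v => sumColor (u + v)) ((HGraph 4 3 1 2).neighborSet u) := by
  intro v huv w huw
  have hcheck : ∀ u ∈ Finset.Icc (-4 : ℤ) 3, ∀ v ∈ Finset.Icc (-4 : ℤ) 3,
      ∀ w ∈ Finset.Icc (-4 : ℤ) 3, (HGraph 4 3 1 2).Adj u v → (HGraph 4 3 1 2).Adj u w →
        sumColor (u + v) = sumColor (u + w) → v = w := by
    decide
  exact hcheck u (HGraph.mem_Icc_of_adj huv) v (HGraph.mem_Icc_of_adj huv.symm)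
    w (HGraph.mem_Icc_of_adj huw.symm) huv huw

theorem H_4_3_1_2_nonperfect :
    edgeSumChromatic (HGraph 4 3 1 2) = 6 ∧ chromaticIndex (HGraph 4 3 1 2) = 5 ∧
    chromaticIndex (HGraph 4 3 1 2) ≠ edgeSumChromatic (HGraph 4 3 1 2) := by
  have hc : IsProperEdgeColoring (HGraph 4 3 1 2) (sumColor ∘ edgeSum) :=
    isProperEdgeColoring_comp_edgeSum injOn_sumColor_neighborSet_HGraph_4_3_1_2
  have hχ' : chromaticIndex (HGraph 4 3 1 2) = 5 :=
    le_antisymm (chromaticIndex_le hc)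
      (ncard_incidenceSet_HGraph_4_3_1_2_zero ▸ ncard_incidenceSet_le_chromaticIndex hc 0)
  refine ⟨edgeSumChromatic_HGraph_4_3_1_2, hχ', ?_⟩
  rw [hχ', edgeSumChromatic_HGraph_4_3_1_2]
  decide
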